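/- Let ρ, Θ, 𝒯 : ℝ × ℝ³ → ℝ and u, v : ℝ × ℝ³ → ℝ³ be continuously differentiable, and let G : ℝ → ℝ be continuously differentiable. Assume that at every point: ∂_t ρ + div_x(ρ u) = 0, ∂_t Θ + u·∇_x Θ = 0, and ∂_t 𝒯 + v·∇_x 𝒯 = 0. Then at every point the identity ∂_t( (1/2) ρ (G(Θ) − 𝒯)² ) + div_x( (1/2) ρ (G(Θ) − 𝒯)² u ) = ρ (G(Θ) − 𝒯) (v − u)·∇_x 𝒯 holds. -/

import Mathlib

/-!
Write `D = ∂ₜ + u·∇ₓ` for the material derivative along `u`. Since `div(φu) = u·∇φ + φ div u`,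
the continuity equation turns `∂ₜ(ρφ) + div(ρφu)` into `ρ Dφ`. For `φ = ½w²` with
`w = G(Θ) − 𝒯` this is `ρ w Dw`, and `Dw = G'(Θ) DΘ − D𝒯 = (v − u)·∇𝒯`, because `DΘ = 0` and
`D𝒯 = ∂ₜ𝒯 + u·∇𝒯 = (u − v)·∇𝒯`.
-/

open RealInnerProductSpace

/-- Three-dimensional Euclidean space. -/
abbrev E3 : Type := EuclideanSpace ℝ (Fin 3)

/-- Divergence of a vector field on `ℝ³`. -/
noncomputable def div3 (V : E3 → E3) (x : E3) : ℝ :=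
  ∑ i : Fin 3, ⟪fderiv ℝ V x (EuclideanSpace.single i 1), EuclideanSpace.single i 1⟫

open Function (uncurry)

section MaterialDerivative

variable {E : Type*} [NormedAddCommGroup E] [NormedSpace ℝ E]
  {f g : ℝ → E → ℝ} {V : E} {t : ℝ} {x : E}

noncomputable def materialDeriv (f : ℝ → E → ℝ) (V : E) (t : ℝ) (x : E) : ℝ :=
  fderiv ℝ (uncurry f) (t, x) (1, V)

theorem materialDeriv_eq (hf : DifferentiableAt ℝ (uncurry f) (t, x)) :
    materialDeriv f V t x = deriv (fun s => f s x) t + fderiv ℝ (f t) x V := by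
  have htime : HasDerivAt (fun s => f s x) (fderiv ℝ (uncurry f) (t, x) (1, 0)) t :=
    hf.hasFDerivAt.comp_hasDerivAt_of_eq t ((hasDerivAt_id t).prodMk (hasDerivAt_const t x)) rfl
  have hspace : HasFDerivAt (f t)
      ((fderiv ℝ (uncurry f) (t, x)).comp (ContinuousLinearMap.inr ℝ ℝ E)) x :=
    hf.hasFDerivAt.comp x (hasFDerivAt_prodMk_right t x)
  rw [htime.deriv, hspace.fderiv, ContinuousLinearMap.comp_apply, ContinuousLinearMap.inr_apply,
    ← map_add, Prod.mk_add_mk, add_zero, zero_add]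
  rfl

theorem materialDeriv_sub (hf : DifferentiableAt ℝ (uncurry f) (t, x))
    (hg : DifferentiableAt ℝ (uncurry g) (t, x)) :
    materialDeriv (fun s y => f s y - g s y) V t x =
      materialDeriv f V t x - materialDeriv g V t x := by
  rw [materialDeriv, show uncurry (fun s y => f s y - g s y) = uncurry f - uncurry g from rfl,
    fderiv_sub hf hg]
  rfl

theorem materialDeriv_mul (hf : DifferentiableAt ℝ (uncurry f) (t, x))
    (hg : DifferentiableAt ℝ (uncurry g) (t, x)) :
    materialDeriv (fun s y => f s y * g s y) V t x =
      f t x * materialDeriv g V t x + g t x * materialDeriv f V t x := by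
  rw [materialDeriv, show uncurry (fun s y => f s y * g s y) = uncurry f * uncurry g from rfl,
    fderiv_mul hf hg]
  rfl

theorem materialDeriv_const_mul (hf : DifferentiableAt ℝ (uncurry f) (t, x)) (c : ℝ) :
    materialDeriv (fun s y => c * f s y) V t x = c * materialDeriv f V t x := by
  rw [materialDeriv, show uncurry (fun s y => c * f s y) = fun p => c * uncurry f p from rfl,
    fderiv_const_mul hf]
  rfl

theorem materialDeriv_pow (hf : DifferentiableAt ℝ (uncurry f) (t, x)) (n : ℕ) :
    materialDeriv (fun s y => f s y ^ n) V t x = n * f t x ^ (n - 1) * materialDeriv f V t x := by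
  rw [materialDeriv, show uncurry (fun s y => f s y ^ n) = uncurry f ^ n from rfl,
    fderiv_pow n hf]
  simp [materialDeriv]

theorem materialDeriv_comp {G : ℝ → ℝ} (hG : DifferentiableAt ℝ G (f t x))
    (hf : DifferentiableAt ℝ (uncurry f) (t, x)) :
    materialDeriv (fun s y => G (f s y)) V t x = deriv G (f t x) * materialDeriv f V t x := by
  rw [materialDeriv, show uncurry (fun s y => G (f s y)) = G ∘ uncurry f from rfl,
    (hG.hasDerivAt.comp_hasFDerivAt (t, x) hf.hasFDerivAt).fderiv]
  rfl

theorem materialDeriv_half_mul_mul_sq (hf : DifferentiableAt ℝ (uncurry f) (t, x))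
    (hg : DifferentiableAt ℝ (uncurry g) (t, x)) :
    materialDeriv (fun s y => 1 / 2 * f s y * g s y ^ 2) V t x =
      1 / 2 * g t x ^ 2 * materialDeriv f V t x + f t x * g t x * materialDeriv g V t x := by
  rw [materialDeriv_mul (hf.const_mul _) (hg.pow 2), materialDeriv_const_mul hf,
    materialDeriv_pow hg]
  push_cast
  ring

end MaterialDerivative

theorem materialDeriv_eq_deriv_add_inner_gradient {E : Type*} [NormedAddCommGroup E]
    [InnerProductSpace ℝ E] [CompleteSpace E] {f : ℝ → E → ℝ} {V : E} {t : ℝ} {x : E}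
    (hf : DifferentiableAt ℝ (uncurry f) (t, x)) :
    materialDeriv f V t x = deriv (fun s => f s x) t + ⟪V, gradient (f t) x⟫ := by
  rw [materialDeriv_eq hf, real_inner_comm, inner_gradient_left]

theorem div3_smul {f : E3 → ℝ} {V : E3 → E3} {x : E3} (hf : DifferentiableAt ℝ f x)
    (hV : DifferentiableAt ℝ V x) :
    div3 (fun y => f y • V y) x = fderiv ℝ f x (V x) + f x * div3 V x := by
  have hexpand : fderiv ℝ f x (V x) =
      ∑ i : Fin 3, fderiv ℝ f x (EuclideanSpace.single i 1) * ⟪V x, EuclideanSpace.single i 1⟫ := by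
    conv_lhs => rw [← (EuclideanSpace.basisFun (Fin 3) ℝ).sum_repr' (V x)]
    simp [real_inner_comm, mul_comm]
  simp only [div3, fderiv_fun_smul hf hV, add_apply, smul_apply,
    ContinuousLinearMap.smulRight_apply, inner_add_left, real_inner_smul_left,
    Finset.sum_add_distrib, ← Finset.mul_sum, hexpand]
  ring

theorem deriv_add_div3_smul {f : ℝ → E3 → ℝ} {u : ℝ → E3 → E3} {t : ℝ} {x : E3}
    (hf : DifferentiableAt ℝ (uncurry f) (t, x)) (hu : DifferentiableAt ℝ (u t) x) :
    deriv (fun s => f s x) t + div3 (fun y => f t y • u t y) x =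
      materialDeriv f (u t x) t x + f t x * div3 (u t) x := by
  have hfx : DifferentiableAt ℝ (f t) x :=
    hf.comp x (differentiableAt_const t |>.prodMk differentiableAt_id)
  rw [div3_smul hfx hu, materialDeriv_eq hf, add_assoc]

theorem stability_lemma_pointwise_general
    (ρ Θ T : ℝ → E3 → ℝ) (u v : ℝ → E3 → E3) (G : ℝ → ℝ)
    (hρ : ContDiff ℝ 1 (fun p : ℝ × E3 => ρ p.1 p.2))
    (hΘ : ContDiff ℝ 1 (fun p : ℝ × E3 => Θ p.1 p.2))
    (hT : ContDiff ℝ 1 (fun p : ℝ × E3 => T p.1 p.2))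
    (hu : ContDiff ℝ 1 (fun p : ℝ × E3 => u p.1 p.2))
    (hG : ContDiff ℝ 1 G)
    (hcont : ∀ t x, deriv (fun s => ρ s x) t + div3 (fun y => ρ t y • u t y) x = 0)
    (htransΘ : ∀ t x, deriv (fun s => Θ s x) t + ⟪u t x, gradient (Θ t) x⟫ = 0)
    (htransT : ∀ t x, deriv (fun s => T s x) t + ⟪v t x, gradient (T t) x⟫ = 0) :
    ∀ t x,
      deriv (fun s => (1 / 2) * ρ s x * (G (Θ s x) - T s x) ^ 2) t
        + div3 (fun y => ((1 / 2) * ρ t y * (G (Θ t y) - T t y) ^ 2) • u t y) x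
      = ρ t x * (G (Θ t x) - T t x) * ⟪v t x - u t x, gradient (T t) x⟫ := by
  intro t x
  have hρ' : DifferentiableAt ℝ (uncurry ρ) (t, x) := (hρ.differentiable one_ne_zero) _
  have hΘ' : DifferentiableAt ℝ (uncurry Θ) (t, x) := (hΘ.differentiable one_ne_zero) _
  have hT' : DifferentiableAt ℝ (uncurry T) (t, x) := (hT.differentiable one_ne_zero) _
  have hG' : DifferentiableAt ℝ G (Θ t x) := (hG.differentiable one_ne_zero) _
  have hut : DifferentiableAt ℝ (u t) x :=
    ((hu.differentiable one_ne_zero) _).comp x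
      (differentiableAt_const t |>.prodMk differentiableAt_id)
  have hGΘ : DifferentiableAt ℝ (uncurry fun s y => G (Θ s y)) (t, x) :=
    ((hG.comp hΘ).differentiable one_ne_zero) _
  have hw : DifferentiableAt ℝ (uncurry fun s y => G (Θ s y) - T s y) (t, x) := hGΘ.sub hT'
  have hmass : materialDeriv ρ (u t x) t x + ρ t x * div3 (u t) x = 0 :=
    (deriv_add_div3_smul hρ' hut).symm.trans (hcont t x)
  have hΘ_transport : materialDeriv Θ (u t x) t x = 0 :=
    (materialDeriv_eq_deriv_add_inner_gradient hΘ').trans (htransΘ t x)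
  have hw_transport : materialDeriv (fun s y => G (Θ s y) - T s y) (u t x) t x =
      ⟪v t x - u t x, gradient (T t) x⟫ := by
    rw [materialDeriv_sub hGΘ hT', materialDeriv_comp hG' hΘ', hΘ_transport,
      materialDeriv_eq_deriv_add_inner_gradient hT', inner_sub_left]
    linarith [htransT t x]
  have hφ : DifferentiableAt ℝ
      (uncurry fun s y => 1 / 2 * ρ s y * (G (Θ s y) - T s y) ^ 2) (t, x) :=
    (hρ'.const_mul (1 / 2)).mul (hw.pow 2)
  rw [deriv_add_div3_smul hφ hut, materialDeriv_half_mul_mul_sq hρ' hw, hw_transport]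
  linear_combination 1 / 2 * (G (Θ t x) - T t x) ^ 2 * hmass

/-- Local (pointwise) form of the stability lemma: if `ρ, u` satisfy the continuity
equation, `Θ` is transported by `u` and `𝒯` is transported by `v`, then for any `C¹`
renormalization `G`,
`∂_t((1/2)ρ(G(Θ)−𝒯)²) + div((1/2)ρ(G(Θ)−𝒯)² u) = ρ(G(Θ)−𝒯)(v−u)·∇𝒯`. -/
theorem stability_lemma_pointwise
    (ρ Θ T : ℝ → E3 → ℝ) (u v : ℝ → E3 → E3) (G : ℝ → ℝ)
    (hρ : ContDiff ℝ 1 (fun p : ℝ × E3 => ρ p.1 p.2))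
    (hΘ : ContDiff ℝ 1 (fun p : ℝ × E3 => Θ p.1 p.2))
    (hT : ContDiff ℝ 1 (fun p : ℝ × E3 => T p.1 p.2))
    (hu : ContDiff ℝ 1 (fun p : ℝ × E3 => u p.1 p.2))
    (hv : ContDiff ℝ 1 (fun p : ℝ × E3 => v p.1 p.2))
    (hG : ContDiff ℝ 1 G)
    (hcont : ∀ t x, deriv (fun s => ρ s x) t + div3 (fun y => ρ t y • u t y) x = 0)
    (htransΘ : ∀ t x, deriv (fun s => Θ s x) t + ⟪u t x, gradient (Θ t) x⟫ = 0)
    (htransT : ∀ t x, deriv (fun s => T s x) t + ⟪v t x, gradient (T t) x⟫ = 0) :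
    ∀ t x,
      deriv (fun s => (1 / 2) * ρ s x * (G (Θ s x) - T s x) ^ 2) t
        + div3 (fun y => ((1 / 2) * ρ t y * (G (Θ t y) - T t y) ^ 2) • u t y) x
      = ρ t x * (G (Θ t x) - T t x) * ⟪v t x - u t x, gradient (T t) x⟫ :=
  stability_lemma_pointwise_general ρ Θ T u v G hρ hΘ hT hu hG hcont htransΘ htransT
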